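/- Let A = (Q, δ, q₀, F) be a one-letter alphabet alternating finite automaton, and let Δ be the pOCA constructed from A as described. Then: (1) for every q ∈ Q and every n ∈ ℕ, qXⁿZ ∼ q'XⁿZ in S(Δ) if and only if ¬Acc(q, n); and (2) pXZ ∼ p'XZ in S(Δ) if and only if the set {n ∈ ℕ | Acc(q₀, n)} is empty. -/

import Mathlib

open scoped ENNReal

noncomputable section

/-- A probabilistic labelled transition system (pLTS): states `S`, alphabet `A`,
and a transition relation into probability distributions (`PMF`s) on `S`. -/
structure PLTS (S : Type) (A : Type) where
  Tr : S → A → PMF S → Prop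

namespace PLTS

variable {S A : Type}

/-- The mass that a distribution assigns to a set of states. -/
def mass (d : PMF S) (E : Set S) : ℝ≥0∞ := ∑' s : E, d s

/-- Two distributions are `r`-equivalent if they assign equal mass to every
`r`-equivalence class (for an equivalence `r`, the classes are the sets `{t | r s t}`). -/
def REquiv (r : S → S → Prop) (d d' : PMF S) : Prop :=
  ∀ s : S, mass d {t | r s t} = mass d' {t | r s t}

/-- An equivalence relation is a bisimulation if related states can match
each other's transitions with `r`-equivalent target distributions. -/
def IsBisimulation (L : PLTS S A) (r : S → S → Prop) : Prop :=
  Equivalence r ∧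
    ∀ s t, r s t → ∀ a d, L.Tr s a d → ∃ d', L.Tr t a d' ∧ REquiv r d d'

/-- Bisimilarity: the union of all bisimulation relations. -/
def Bisim (L : PLTS S A) (s t : S) : Prop :=
  ∃ r, L.IsBisimulation r ∧ r s t

/-- The bisimulation approximants `∼ₙ`. -/
def approx (L : PLTS S A) : ℕ → S → S → Prop
  | 0 => fun _ _ => True
  | n + 1 => fun s t =>
      (∀ a d, L.Tr s a d → ∃ d', L.Tr t a d' ∧ REquiv (L.approx n) d d') ∧
      (∀ a d', L.Tr t a d' → ∃ d, L.Tr s a d ∧ REquiv (L.approx n) d d')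

/-- A pLTS is finitely branching if every state has finitely many transitions. -/
def FinBranching (L : PLTS S A) : Prop :=
  ∀ s, {p : A × PMF S | L.Tr s p.1 p.2}.Finite

/-- One-step successor relation: `s → s'` iff some transition of `s` gives `s'`
positive probability. -/
def Step (L : PLTS S A) (s s' : S) : Prop :=
  ∃ a d, L.Tr s a d ∧ d s' ≠ 0

end PLTS

/-- The rules of a probabilistic pushdown automaton (pPDA) with control states
`Q`, stack alphabet `Γ`, input alphabet `A`: a rule `qX –a↪ d` is a tuple
`(q, X, a, d)` where `d` is a distribution over pairs of a control state and
a string of length at most two that replaces the top symbol. -/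
def PPDARules (Q Γ A : Type) := Q → Γ → A → PMF (Q × List Γ) → Prop

/-- Well-formedness of pPDA rules: target distributions are supported on
configurations `(p, α)` with `|α| ≤ 2` (i.e. `α ∈ Γ^{≤2}`). -/
def PPDAWf {Q Γ A : Type} (Δ : PPDARules Q Γ A) : Prop :=
  ∀ q X a d, Δ q X a d → ∀ p (α : List Γ), d (p, α) ≠ 0 → α.length ≤ 2

/-- A nondeterministic PDA is a pPDA all of whose rules use Dirac distributions. -/
def IsPDA {Q Γ A : Type} (Δ : PPDARules Q Γ A) : Prop :=
  ∀ q X a d, Δ q X a d → ∃ c, d = PMF.pure c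

/-- The pLTS induced by a pPDA on configurations `Q × Γ*`: a rule `qX –a↪ d`
and a tail `β ∈ Γ*` induce the transition `qXβ –a→ d'` with `d'(pαβ) = d(pα)`;
configurations with empty stack have no transitions. -/
def PPDARules.plts {Q Γ A : Type} (Δ : PPDARules Q Γ A) : PLTS (Q × List Γ) A where
  Tr := fun c a d' => ∃ (q : Q) (X : Γ) (β : List Γ) (d : PMF (Q × List Γ)),
    c = (q, X :: β) ∧ Δ q X a d ∧ d' = d.map (fun pα => (pα.1, pα.2 ++ β))

/-- The stack alphabet `{X, Z}` of a one-counter automaton. -/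
inductive OCSym : Type
  | X : OCSym
  | Z : OCSym
deriving DecidableEq

/-- Well-formedness of pOCA rules: `Z` always and only occurs at the bottom of
the stack, i.e. rules for top `X` rewrite `X` into `ε`, `X` or `XX`, and rules
for top `Z` rewrite `Z` into `Z` or `XZ`. -/
def POCAWf {Q A : Type} (Δ : PPDARules Q OCSym A) : Prop :=
  (∀ q a d, Δ q OCSym.X a d → ∀ p (α : List OCSym), d (p, α) ≠ 0 →
      α = [] ∨ α = [OCSym.X] ∨ α = [OCSym.X, OCSym.X]) ∧
  (∀ q a d, Δ q OCSym.Z a d → ∀ p (α : List OCSym), d (p, α) ≠ 0 →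
      α = [OCSym.Z] ∨ α = [OCSym.X, OCSym.Z])

/-- The configuration `pXᵐZ` of a pOCA. -/
def oconf {Q : Type} (p : Q) (m : ℕ) : Q × List OCSym :=
  (p, List.replicate m OCSym.X ++ [OCSym.Z])

/-- The finite pLTS `ℱ_Δ` underlying a pOCA: `p –a→ d'` iff there is a rule
`pX –a↪ d` with `d'(q) = d(q,ε) + d(q,X) + d(q,XX)` for all `q`. -/
def underlying {Q A : Type} (Δ : PPDARules Q OCSym A) : PLTS Q A where
  Tr := fun p a d' => ∃ d, Δ p OCSym.X a d ∧
    ∀ q : Q, d' q = d (q, []) + d (q, [OCSym.X]) + d (q, [OCSym.X, OCSym.X])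

/-- The disjoint-union pLTS of two pLTSs over the same alphabet. -/
def PLTS.sum {S₁ S₂ A : Type} (L₁ : PLTS S₁ A) (L₂ : PLTS S₂ A) :
    PLTS (S₁ ⊕ S₂) A where
  Tr := fun s a d =>
    (∃ s₁ d₁, s = Sum.inl s₁ ∧ L₁.Tr s₁ a d₁ ∧ d = d₁.map Sum.inl) ∨
    (∃ s₂ d₂, s = Sum.inr s₂ ∧ L₂.Tr s₂ a d₂ ∧ d = d₂.map Sum.inr)

/-- `INC`: configurations `pXᵐZ` that are not related by the `k`-th
approximant (`k = |Q|`) to any state `q` of the underlying finite pLTS, in the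
disjoint union of `S(Δ)` and `ℱ_Δ`. -/
def InINC {Q A : Type} [Fintype Q] (Δ : PPDARules Q OCSym A)
    (p : Q) (m : ℕ) : Prop :=
  ∀ q : Q, ¬ (Δ.plts.sum (underlying Δ)).approx (Fintype.card Q)
      (Sum.inl (oconf p m)) (Sum.inr q)

/-- `ℓ` one-step successor moves lead from `s` to `t`. -/
def PLTS.StepN {S A : Type} (L : PLTS S A) : ℕ → S → S → Prop
  | 0, s, t => s = t
  | n + 1, s, t => ∃ u, L.Step s u ∧ L.StepN n u t

/-- `dist(c)`: the least number of one-step successor moves in `S(Δ)` leading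
from the configuration `c` to some configuration in `INC` (and `∞ = ⊤` if
`INC` is unreachable). -/
def distINC {Q A : Type} [Fintype Q] (Δ : PPDARules Q OCSym A)
    (c : Q × List OCSym) : ℕ∞ :=
  sInf {n : ℕ∞ | ∃ ℓ : ℕ, n = (ℓ : ℕ∞) ∧
    ∃ (p : Q) (m : ℕ), Δ.plts.StepN ℓ c (oconf p m) ∧ InINC Δ p m}

/-- The distribution giving each of `x`, `y` probability `1/2`. -/
def twoPoint {α : Type} (x y : α) : PMF α :=
  (PMF.bernoulli (1 / 2) (by norm_num)).map (fun b => if b then x else y)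

/-- The distribution giving `x` probability `0.4` and `y` probability `0.6`. -/
def wPoint {α : Type} (x y : α) : PMF α :=
  (PMF.bernoulli (2 / 5)
    (by first | (rw [div_le_one₀ (by norm_num)]; norm_num) | (rw [div_le_one (by norm_num)]; norm_num))).map
    (fun b => if b then x else y)

/-- The distribution giving each of `x`, `y`, `z` probability `1/3`. -/
def threePoint {α : Type} (x y z : α) : PMF α :=
  (PMF.uniformOfFintype (Fin 3)).map
    (fun i => if i = 0 then x else if i = 1 then y else z)

/-- Transition function entries of a one-letter alternating finite automaton:
`δ(q)` is either `q₁ ∧ q₂` or `q₁ ∨ q₂`. -/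
inductive Gate (Q : Type) : Type
  | and (q₁ q₂ : Q) : Gate Q
  | or (q₁ q₂ : Q) : Gate Q

/-- The acceptance predicate of a 1L-AFA: `Acc δ F n q` means the automaton
accepts the word of length `n` starting from `q`. -/
def AfaAcc {Q : Type} (δ : Q → Gate Q) (F : Set Q) : ℕ → Q → Prop
  | 0, q => q ∈ F
  | n + 1, q =>
    match δ q with
    | Gate.and q₁ q₂ => AfaAcc δ F n q₁ ∧ AfaAcc δ F n q₂
    | Gate.or q₁ q₂ => AfaAcc δ F n q₁ ∨ AfaAcc δ F n q₂

/-- The control states of the pOCA constructed from a 1L-AFA with state set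
`Q`: the states `p, p'`, the dead state `r`, the copies `q` (`base`) and `q'`
(`prim`) of each AFA state, and the auxiliary gadget states (per AFA state). -/
inductive CS (Q : Type) : Type
  | p : CS Q
  | p' : CS Q
  | r : CS Q
  | base (q : Q) : CS Q
  | prim (q : Q) : CS Q
  | r1 (q : Q) : CS Q
  | r2 (q : Q) : CS Q
  | r1' (q : Q) : CS Q
  | r2' (q : Q) : CS Q
  | s1 (q : Q) : CS Q
  | s2 (q : Q) : CS Q
  | u12 (q : Q) : CS Q
  | u12' (q : Q) : CS Q
  | u1'2 (q : Q) : CS Q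
  | u1'2' (q : Q) : CS Q

/-- The rules of the unary, fully probabilistic pOCA constructed from the
1L-AFA `(Q, δ, q₀, F)`. -/
inductive AfaRule {Q : Type} (δ : Q → Gate Q) (F : Set Q) (q₀ : Q) :
    CS Q → OCSym → Unit → PMF (CS Q × List OCSym) → Prop
  /- for `q ∈ F` the rule `qZ –1↪ rZ`; all other `Z`-rules are absent -/
  | acc (q : Q) (h : q ∈ F) :
      AfaRule δ F q₀ (CS.base q) OCSym.Z () (PMF.pure (CS.r, [OCSym.Z]))
  /- AND-gadget for `δ(q) = q₁ ∨ q₂` -/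
  | org₁ (q q₁ q₂ : Q) (h : δ q = Gate.or q₁ q₂) :
      AfaRule δ F q₀ (CS.base q) OCSym.X ()
        (twoPoint (CS.r1 q, [OCSym.X]) (CS.r2 q, [OCSym.X]))
  | org₂ (q q₁ q₂ : Q) (h : δ q = Gate.or q₁ q₂) :
      AfaRule δ F q₀ (CS.prim q) OCSym.X ()
        (twoPoint (CS.r1' q, [OCSym.X]) (CS.r2' q, [OCSym.X]))
  | org₃ (q q₁ q₂ : Q) (h : δ q = Gate.or q₁ q₂) :
      AfaRule δ F q₀ (CS.r1 q) OCSym.X ()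
        (twoPoint (CS.base q₁, []) (CS.s1 q, [OCSym.X]))
  | org₄ (q q₁ q₂ : Q) (h : δ q = Gate.or q₁ q₂) :
      AfaRule δ F q₀ (CS.r2 q) OCSym.X ()
        (twoPoint (CS.base q₂, []) (CS.s2 q, [OCSym.X]))
  | org₅ (q q₁ q₂ : Q) (h : δ q = Gate.or q₁ q₂) :
      AfaRule δ F q₀ (CS.r1' q) OCSym.X ()
        (twoPoint (CS.prim q₁, []) (CS.s1 q, [OCSym.X]))
  | org₆ (q q₁ q₂ : Q) (h : δ q = Gate.or q₁ q₂) :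
      AfaRule δ F q₀ (CS.r2' q) OCSym.X ()
        (twoPoint (CS.prim q₂, []) (CS.s2 q, [OCSym.X]))
  | sg₁ (q : Q) :
      AfaRule δ F q₀ (CS.s1 q) OCSym.X ()
        (twoPoint (CS.s1 q, [OCSym.X]) (CS.r, []))
  | sg₂ (q : Q) :
      AfaRule δ F q₀ (CS.s2 q) OCSym.X ()
        (wPoint (CS.s2 q, [OCSym.X]) (CS.r, []))
  /- OR-gadget for `δ(q) = q₁ ∧ q₂` -/
  | andg₁ (q q₁ q₂ : Q) (h : δ q = Gate.and q₁ q₂) :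
      AfaRule δ F q₀ (CS.base q) OCSym.X ()
        (twoPoint (CS.u12 q, [OCSym.X]) (CS.u1'2' q, [OCSym.X]))
  | andg₂ (q q₁ q₂ : Q) (h : δ q = Gate.and q₁ q₂) :
      AfaRule δ F q₀ (CS.prim q) OCSym.X ()
        (twoPoint (CS.u12' q, [OCSym.X]) (CS.u1'2 q, [OCSym.X]))
  | andg₃ (q q₁ q₂ : Q) (h : δ q = Gate.and q₁ q₂) :
      AfaRule δ F q₀ (CS.u12 q) OCSym.X ()
        (twoPoint (CS.base q₁, []) (CS.base q₂, []))
  | andg₄ (q q₁ q₂ : Q) (h : δ q = Gate.and q₁ q₂) :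
      AfaRule δ F q₀ (CS.u1'2' q) OCSym.X ()
        (twoPoint (CS.prim q₁, []) (CS.prim q₂, []))
  | andg₅ (q q₁ q₂ : Q) (h : δ q = Gate.and q₁ q₂) :
      AfaRule δ F q₀ (CS.u12' q) OCSym.X ()
        (twoPoint (CS.base q₁, []) (CS.prim q₂, []))
  | andg₆ (q q₁ q₂ : Q) (h : δ q = Gate.and q₁ q₂) :
      AfaRule δ F q₀ (CS.u1'2 q) OCSym.X ()
        (twoPoint (CS.prim q₁, []) (CS.base q₂, []))
  /- the initial rules for `p` and `p'` -/
  | pinit :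
      AfaRule δ F q₀ CS.p OCSym.X ()
        (threePoint (CS.p, [OCSym.X, OCSym.X]) (CS.base q₀, []) (CS.r, [OCSym.X]))
  | pinit' :
      AfaRule δ F q₀ CS.p' OCSym.X ()
        (threePoint (CS.p', [OCSym.X, OCSym.X]) (CS.prim q₀, []) (CS.r, [OCSym.X]))

/-!
For `⇐`, send a primed configuration to its unprimed twin whenever the AFA state deciding its
behaviour (for a gadget state: the relevant child, one counter level down) rejects the current
counter value, `p'XᵐZ` to `pXᵐZ` when no word is accepted, and every other configuration to
itself. Modulo this map every configuration has the same successor distribution as its image, so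
its kernel is a bisimulation, and it identifies the required pairs.

For `⇒`, push the successor distributions of configurations related by a bisimulation `r` forward
to the quotient by `r`: two-point distributions then agree as multisets of classes, so successors
are matched pairwise. At counter `0` an accepting `q` has a move that `q'` lacks. In the gadget of
an `∧`-state the matched pair `u₁₂ ∼ u₁₂'` or `u₁₂ ∼ u₁'₂` shares one component, which forces the
other child pair to be related. In the gadget of an `∨`-state the crossed matching `r₁ ∼ r₂'` is
impossible, since `s₁` and `s₂` move to the dead state with the different probabilities `1/2` and
`0.6`, and a primed configuration never reaches a dead state in one step; so both child pairs are
related. By induction on `n`, `Acc(q, n)` separates `qXⁿZ` from `q'XⁿZ`. Finally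
`pXᵐ⁺¹Z ∼ p'Xᵐ⁺¹Z` forces both `pXᵐ⁺²Z ∼ p'Xᵐ⁺²Z` and `q₀XᵐZ ∼ q₀'XᵐZ` in the same way.
-/

section Distributions

variable {α β : Type}

theorem map_twoPoint (f : α → β) (x y : α) :
    (twoPoint x y).map f = twoPoint (f x) (f y) := by
  rw [twoPoint, twoPoint, PMF.map_comp]
  congr 1
  funext b
  cases b <;> rfl

theorem map_wPoint (f : α → β) (x y : α) :
    (wPoint x y).map f = wPoint (f x) (f y) := by
  rw [wPoint, wPoint, PMF.map_comp]
  congr 1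
  funext b
  cases b <;> rfl

theorem map_threePoint (f : α → β) (x y z : α) :
    (threePoint x y z).map f = threePoint (f x) (f y) (f z) := by
  rw [threePoint, threePoint, PMF.map_comp]
  congr 1
  funext i
  fin_cases i <;> rfl

theorem PMF.ofMultiset_eq_ofMultiset_iff {s t : Multiset α} (hs : s ≠ 0) (ht : t ≠ 0)
    (hst : Multiset.card s = Multiset.card t) :
    PMF.ofMultiset s hs = PMF.ofMultiset t ht ↔ s = t := by
  classical
  refine ⟨fun h => Multiset.ext.2 fun a => ?_, fun h => by subst h; rfl⟩
  have ha := congrArg (· a) h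
  simp only [PMF.ofMultiset_apply, hst] at ha
  have hcard : (Multiset.card t : ℝ≥0∞) ≠ 0 := by simpa using ht
  rw [div_eq_mul_inv, div_eq_mul_inv, ENNReal.mul_left_inj (by simp) (by simpa using hcard)] at ha
  exact_mod_cast ha

theorem twoPoint_eq_ofMultiset (x y : α) :
    twoPoint x y = PMF.ofMultiset {x, y} (by simp) := by
  classical
  ext w
  simp [twoPoint, PMF.map_apply, PMF.ofMultiset_apply, PMF.bernoulli]
  split_ifs <;> simp_all [ENNReal.div_eq_inv_mul]
  ring

theorem threePoint_eq_ofMultiset (x y z : α) :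
    threePoint x y z = PMF.ofMultiset {x, y, z} (by simp) := by
  classical
  ext w
  simp [threePoint, PMF.map_apply, Fin.sum_univ_three, PMF.ofMultiset_apply]
  split_ifs <;> simp_all [ENNReal.div_eq_inv_mul] <;> ring

theorem support_twoPoint (x y : α) : (twoPoint x y).support = {x, y} := by
  classical
  simp [twoPoint_eq_ofMultiset, PMF.support_ofMultiset]

theorem support_threePoint (x y z : α) : (threePoint x y z).support = {x, y, z} := by
  classical
  simp [threePoint_eq_ofMultiset, PMF.support_ofMultiset]

theorem twoPoint_comm (x y : α) : twoPoint x y = twoPoint y x := by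
  simp only [twoPoint_eq_ofMultiset, Multiset.pair_comm]

theorem twoPoint_eq_twoPoint_iff {x y x' y' : α} :
    twoPoint x y = twoPoint x' y' ↔ x = x' ∧ y = y' ∨ x = y' ∧ y = x' := by
  refine ⟨fun h => ?_, ?_⟩
  · simpa [support_twoPoint, Set.pair_eq_pair_iff] using congrArg PMF.support h
  · rintro (⟨rfl, rfl⟩ | ⟨rfl, rfl⟩)
    · rfl
    · exact twoPoint_comm _ _

theorem twoPoint_eq_twoPoint_of_threePoint_eq {x y z x' y' : α}
    (h : threePoint x y z = threePoint x' y' z) : twoPoint x y = twoPoint x' y' := by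
  rw [threePoint_eq_ofMultiset, threePoint_eq_ofMultiset,
    PMF.ofMultiset_eq_ofMultiset_iff _ _ (by simp)] at h
  rw [twoPoint_eq_ofMultiset, twoPoint_eq_ofMultiset,
    PMF.ofMultiset_eq_ofMultiset_iff _ _ (by simp)]
  have h' : ({x, y} : Multiset α) + {z} = {x', y'} + {z} := by simpa using h
  exact add_right_cancel h'

theorem twoPoint_ne_wPoint {x y : α} (hxy : x ≠ y) (x' y' : α) :
    twoPoint x y ≠ wPoint x' y' := by
  classical
  intro h
  have hx := congrArg (· x) h
  have h35 : (1 - 2 / 5 : ℝ≥0∞) = 3 / 5 := by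
    refine ENNReal.sub_eq_of_eq_add (by simp [ENNReal.div_eq_top]) ?_
    rw [ENNReal.div_add_div_same, eq_comm, ENNReal.div_eq_one_iff] <;> norm_num
  simp [twoPoint_eq_ofMultiset, PMF.ofMultiset_apply, hxy, wPoint, PMF.map_apply,
    PMF.bernoulli, h35] at hx
  split_ifs at hx <;> have := congrArg ENNReal.toReal hx <;>
    norm_num [ENNReal.div_add_div_same, ENNReal.div_self] at this

end Distributions

namespace PLTS

variable {S T : Type}

theorem mass_eq_map_apply (f : S → T) (d : PMF S) (b : T) :
    mass d {s | f s = b} = d.map f b := by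
  classical
  rw [mass, tsum_subtype, PMF.map_apply]
  exact tsum_congr fun s => by simp [Set.indicator, eq_comm]

theorem requiv_ker_iff (f : S → T) {d d' : PMF S} :
    REquiv (fun x y => f x = f y) d d' ↔ d.map f = d'.map f := by
  refine ⟨fun h => PMF.ext fun b => ?_, fun h s => ?_⟩
  · by_cases hb : ∃ s, f s = b
    · obtain ⟨s, rfl⟩ := hb
      simpa only [← mass_eq_map_apply, eq_comm] using h s
    · simp only [not_exists] at hb
      simp [PMF.map_apply, fun s => Ne.symm (hb s)]
  · simpa only [mass_eq_map_apply, eq_comm (a := f s)] using congrArg (· (f s)) h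

theorem requiv_iff_map_quot_mk_eq {r : S → S → Prop} (hr : Equivalence r) {d d' : PMF S} :
    REquiv r d d' ↔ d.map (Quot.mk r) = d'.map (Quot.mk r) := by
  rw [← requiv_ker_iff]
  simp only [hr.quot_mk_eq_iff]

variable {L : PLTS S Unit} {step : S → Option (PMF S)}

theorem isBisimulation_ker (hL : ∀ s d, L.Tr s () d ↔ step s = some d) (f : S → S)
    (hf : ∀ s, (step s).map (PMF.map f) = (step (f s)).map (PMF.map f)) :
    L.IsBisimulation fun x y => f x = f y := by
  refine ⟨⟨fun _ => rfl, Eq.symm, Eq.trans⟩, fun s t hst _ d hd => ?_⟩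
  have hsame : (step s).map (PMF.map f) = (step t).map (PMF.map f) := by
    rw [hf s, hst, ← hf t]
  rw [hL] at hd
  rw [hd, Option.map_some, eq_comm, Option.map_eq_some_iff] at hsame
  obtain ⟨d', hd', hmap⟩ := hsame
  exact ⟨d', (hL t d').2 hd', (requiv_ker_iff f).2 hmap.symm⟩

namespace IsBisimulation

variable {r : S → S → Prop} (hL : ∀ s d, L.Tr s () d ↔ step s = some d)
  (hr : L.IsBisimulation r)
include hL hr

theorem map_step_eq {s t : S} (h : r s t) :
    (step s).map (PMF.map (Quot.mk r)) = (step t).map (PMF.map (Quot.mk r)) := by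
  cases hs : step s with
  | some d =>
    obtain ⟨d', hd', hdd'⟩ := hr.2 s t h () d ((hL s d).2 hs)
    rw [(hL t d').1 hd', Option.map_some, Option.map_some,
      (requiv_iff_map_quot_mk_eq hr.1).1 hdd']
  | none =>
    cases ht : step t with
    | none => rfl
    | some e =>
      obtain ⟨d', hd', -⟩ := hr.2 t s (hr.1.symm h) () e ((hL t e).2 ht)
      simp [(hL s d').1 hd'] at hs

theorem map_eq_of_step {s t : S} {d e : PMF S} (h : r s t) (hs : step s = some d)
    (ht : step t = some e) : d.map (Quot.mk r) = e.map (Quot.mk r) := by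
  simpa [hs, ht] using map_step_eq hL hr h

theorem not_rel_of_step_eq_none {s t : S} (hs : step s ≠ none) (ht : step t = none) :
    ¬ r s t := fun h => hs (by simpa [ht] using map_step_eq hL hr h)

theorem rel_of_twoPoint {s t x y x' y' : S} (h : r s t) (hs : step s = some (twoPoint x y))
    (ht : step t = some (twoPoint x' y')) : r x x' ∧ r y y' ∨ r x y' ∧ r y x' := by
  have := map_eq_of_step hL hr h hs ht
  simpa only [map_twoPoint, twoPoint_eq_twoPoint_iff, hr.1.quot_mk_eq_iff] using this

theorem rel_of_twoPoint_left {s t x y y' : S} (h : r s t) (hs : step s = some (twoPoint x y))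
    (ht : step t = some (twoPoint x y')) : r y y' := by
  rcases rel_of_twoPoint hL hr h hs ht with ⟨-, hy⟩ | ⟨hxy', hyx⟩
  · exact hy
  · exact hr.1.trans hyx hxy'

theorem rel_of_twoPoint_right {s t x y x' : S} (h : r s t) (hs : step s = some (twoPoint x y))
    (ht : step t = some (twoPoint x' y)) : r x x' := by
  rcases rel_of_twoPoint hL hr h hs ht with ⟨hx, -⟩ | ⟨hxy, hyx'⟩
  · exact hx
  · exact hr.1.trans hxy hyx'

theorem rel_of_threePoint {s t x y z x' y' : S} (h : r s t)
    (hs : step s = some (threePoint x y z)) (ht : step t = some (threePoint x' y' z)) :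
    r x x' ∧ r y y' ∨ r x y' ∧ r y x' := by
  have := twoPoint_eq_twoPoint_of_threePoint_eq <|
    by simpa only [map_threePoint] using map_eq_of_step hL hr h hs ht
  simpa only [twoPoint_eq_twoPoint_iff, hr.1.quot_mk_eq_iff] using this

theorem not_rel_of_twoPoint_wPoint {s t x y x' y' : S} (hs : step s = some (twoPoint x y))
    (hxy : ¬ r x y) (ht : step t = some (wPoint x' y')) : ¬ r s t := fun h =>
  twoPoint_ne_wPoint (mt (hr.1.quot_mk_eq_iff _ _).1 hxy) _ _ <| by
    simpa only [map_twoPoint, map_wPoint] using map_eq_of_step hL hr h hs ht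

theorem not_rel_of_dead_mem_support {s t z : S} {d : PMF S} (hs : step s = some d)
    (hz : z ∈ d.support) (hdead : step z = none)
    (ht : ∀ e, step t = some e → ∀ w ∈ e.support, step w ≠ none) : ¬ r s t := by
  intro h
  obtain ⟨e, he⟩ := Option.ne_none_iff_exists'.1 fun hnone =>
    not_rel_of_step_eq_none hL hr (by simp [hs]) hnone h
  have hzcls : Quot.mk r z ∈ (e.map (Quot.mk r)).support := by
    rw [← map_eq_of_step hL hr h hs he]
    exact (PMF.mem_support_map_iff _ _ _).2 ⟨z, hz, rfl⟩
  obtain ⟨w, hw, hwz⟩ := (PMF.mem_support_map_iff _ _ _).1 hzcls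
  exact not_rel_of_step_eq_none hL hr (ht e he w hw) hdead ((hr.1.quot_mk_eq_iff _ _).1 hwz)

end IsBisimulation

end PLTS

@[simp] def Gate.fst {Q : Type} : Gate Q → Q
  | .and q₁ _ => q₁
  | .or q₁ _ => q₁

@[simp] def Gate.snd {Q : Type} : Gate Q → Q
  | .and _ q₂ => q₂
  | .or _ q₂ => q₂

namespace AfaPOCA

open OCSym

variable {Q : Type} (δ : Q → Gate Q) (F : Set Q) (q₀ : Q)

abbrev Config (Q : Type) := CS Q × List OCSym

abbrev afaPLTS : PLTS (Config Q) Unit :=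
  PPDARules.plts (AfaRule δ F q₀ : PPDARules (CS Q) OCSym Unit)

def stk (n : ℕ) : List OCSym := List.replicate n X ++ [Z]

theorem oconf_eq (c : CS Q) (n : ℕ) : oconf c n = (c, stk n) := rfl

@[simp] theorem stk_inj {m n : ℕ} : stk m = stk n ↔ m = n :=
  ⟨fun h => by simpa [stk] using congrArg List.length h, congrArg stk⟩

@[simp] theorem cons_stk (n : ℕ) : X :: stk n = stk (n + 1) := rfl

open Classical in
def rule : CS Q → OCSym → Option (PMF (Config Q))
  | .base q, Z => if q ∈ F then some (PMF.pure (.r, [Z])) else none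
  | .base q, X =>
    match δ q with
    | .or _ _ => some (twoPoint (.r1 q, [X]) (.r2 q, [X]))
    | .and _ _ => some (twoPoint (.u12 q, [X]) (.u1'2' q, [X]))
  | .prim q, X =>
    match δ q with
    | .or _ _ => some (twoPoint (.r1' q, [X]) (.r2' q, [X]))
    | .and _ _ => some (twoPoint (.u12' q, [X]) (.u1'2 q, [X]))
  | .r1 q, X =>
    match δ q with
    | .or q₁ _ => some (twoPoint (.base q₁, []) (.s1 q, [X]))
    | .and _ _ => none
  | .r2 q, X =>
    match δ q with
    | .or _ q₂ => some (twoPoint (.base q₂, []) (.s2 q, [X]))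
    | .and _ _ => none
  | .r1' q, X =>
    match δ q with
    | .or q₁ _ => some (twoPoint (.prim q₁, []) (.s1 q, [X]))
    | .and _ _ => none
  | .r2' q, X =>
    match δ q with
    | .or _ q₂ => some (twoPoint (.prim q₂, []) (.s2 q, [X]))
    | .and _ _ => none
  | .u12 q, X =>
    match δ q with
    | .and q₁ q₂ => some (twoPoint (.base q₁, []) (.base q₂, []))
    | .or _ _ => none
  | .u1'2' q, X =>
    match δ q with
    | .and q₁ q₂ => some (twoPoint (.prim q₁, []) (.prim q₂, []))
    | .or _ _ => none
  | .u12' q, X =>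
    match δ q with
    | .and q₁ q₂ => some (twoPoint (.base q₁, []) (.prim q₂, []))
    | .or _ _ => none
  | .u1'2 q, X =>
    match δ q with
    | .and q₁ q₂ => some (twoPoint (.prim q₁, []) (.base q₂, []))
    | .or _ _ => none
  | .s1 q, X => some (twoPoint (.s1 q, [X]) (.r, []))
  | .s2 q, X => some (wPoint (.s2 q, [X]) (.r, []))
  | .p, X => some (threePoint (.p, [X, X]) (.base q₀, []) (.r, [X]))
  | .p', X => some (threePoint (.p', [X, X]) (.prim q₀, []) (.r, [X]))
  | _, _ => none

def step : Config Q → Option (PMF (Config Q))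
  | (_, []) => none
  | (s, Y :: β) => (rule δ F q₀ s Y).map (PMF.map fun c => (c.1, c.2 ++ β))

theorem afaRule_iff (s : CS Q) (Y : OCSym) (d : PMF (Config Q)) :
    AfaRule δ F q₀ s Y () d ↔ rule δ F q₀ s Y = some d := by
  constructor
  · intro h
    cases h <;> simp_all [rule]
  · intro h
    cases s <;> cases Y <;> simp only [rule] at h <;> (try split at h) <;> cases h <;>
      constructor <;> assumption

theorem tr_iff (c : Config Q) (d : PMF (Config Q)) :
    (afaPLTS δ F q₀).Tr c () d ↔ step δ F q₀ c = some d := by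
  obtain ⟨s, γ⟩ := c
  constructor
  · rintro ⟨s, Y, β, e, hc, he, rfl⟩
    cases hc
    simp [step, (afaRule_iff δ F q₀ s Y e).1 he]
  · intro h
    cases γ with
    | nil => cases h
    | cons Y β =>
      obtain ⟨e, he, rfl⟩ := Option.map_eq_some_iff.1 h
      exact ⟨s, Y, β, e, rfl, (afaRule_iff δ F q₀ s Y e).2 he, rfl⟩

section Steps

variable {δ F q₀} {q q₁ q₂ : Q} {β : List OCSym}

theorem step_stk_zero (s : CS Q) :
    step δ F q₀ (s, stk 0) = (rule δ F q₀ s Z).map (PMF.map fun c => (c.1, c.2 ++ [])) := rfl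

theorem step_stk_succ (s : CS Q) (n : ℕ) :
    step δ F q₀ (s, stk (n + 1)) =
      (rule δ F q₀ s X).map (PMF.map fun c => (c.1, c.2 ++ stk n)) :=
  rfl

theorem step_r {γ : List OCSym} : step δ F q₀ (.r, γ) = none := by
  rcases γ with _ | ⟨_ | _, _⟩ <;> rfl

theorem step_base_zero (hq : q ∈ F) : step δ F q₀ (.base q, stk 0) ≠ none := by
  simp [step_stk_zero, rule, hq]

theorem step_prim_zero : step δ F q₀ (.prim q, stk 0) = none := rfl

theorem step_base_or (hg : δ q = .or q₁ q₂) :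
    step δ F q₀ (.base q, X :: β) = some (twoPoint (.r1 q, X :: β) (.r2 q, X :: β)) := by
  simp [step, rule, hg, map_twoPoint]

theorem step_prim_or (hg : δ q = .or q₁ q₂) :
    step δ F q₀ (.prim q, X :: β) = some (twoPoint (.r1' q, X :: β) (.r2' q, X :: β)) := by
  simp [step, rule, hg, map_twoPoint]

theorem step_base_and (hg : δ q = .and q₁ q₂) :
    step δ F q₀ (.base q, X :: β) = some (twoPoint (.u12 q, X :: β) (.u1'2' q, X :: β)) := by
  simp [step, rule, hg, map_twoPoint]

theorem step_prim_and (hg : δ q = .and q₁ q₂) :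
    step δ F q₀ (.prim q, X :: β) = some (twoPoint (.u12' q, X :: β) (.u1'2 q, X :: β)) := by
  simp [step, rule, hg, map_twoPoint]

theorem step_r1 (hg : δ q = .or q₁ q₂) :
    step δ F q₀ (.r1 q, X :: β) = some (twoPoint (.base q₁, β) (.s1 q, X :: β)) := by
  simp [step, rule, hg, map_twoPoint]

theorem step_r1' (hg : δ q = .or q₁ q₂) :
    step δ F q₀ (.r1' q, X :: β) = some (twoPoint (.prim q₁, β) (.s1 q, X :: β)) := by
  simp [step, rule, hg, map_twoPoint]

theorem step_r2 (hg : δ q = .or q₁ q₂) :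
    step δ F q₀ (.r2 q, X :: β) = some (twoPoint (.base q₂, β) (.s2 q, X :: β)) := by
  simp [step, rule, hg, map_twoPoint]

theorem step_r2' (hg : δ q = .or q₁ q₂) :
    step δ F q₀ (.r2' q, X :: β) = some (twoPoint (.prim q₂, β) (.s2 q, X :: β)) := by
  simp [step, rule, hg, map_twoPoint]

theorem step_u12 (hg : δ q = .and q₁ q₂) :
    step δ F q₀ (.u12 q, X :: β) = some (twoPoint (.base q₁, β) (.base q₂, β)) := by
  simp [step, rule, hg, map_twoPoint]

theorem step_u12' (hg : δ q = .and q₁ q₂) :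
    step δ F q₀ (.u12' q, X :: β) = some (twoPoint (.base q₁, β) (.prim q₂, β)) := by
  simp [step, rule, hg, map_twoPoint]

theorem step_u1'2 (hg : δ q = .and q₁ q₂) :
    step δ F q₀ (.u1'2 q, X :: β) = some (twoPoint (.prim q₁, β) (.base q₂, β)) := by
  simp [step, rule, hg, map_twoPoint]

theorem step_s1 :
    step δ F q₀ (.s1 q, X :: β) = some (twoPoint (.s1 q, X :: β) (.r, β)) := by
  simp [step, rule, map_twoPoint]

theorem step_s2 :
    step δ F q₀ (.s2 q, X :: β) = some (wPoint (.s2 q, X :: β) (.r, β)) := by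
  simp [step, rule, map_wPoint]

theorem step_p :
    step δ F q₀ (.p, X :: β) =
      some (threePoint (.p, X :: X :: β) (.base q₀, β) (.r, X :: β)) := by
  simp [step, rule, map_threePoint]

theorem step_p' :
    step δ F q₀ (.p', X :: β) =
      some (threePoint (.p', X :: X :: β) (.prim q₀, β) (.r, X :: β)) := by
  simp [step, rule, map_threePoint]

theorem step_ne_none_of_mem_support_step_prim {γ : List OCSym} {e : PMF (Config Q)}
    (he : step δ F q₀ (.prim q, γ) = some e) : ∀ c ∈ e.support, step δ F q₀ c ≠ none := by
  rcases γ with _ | ⟨_ | _, β⟩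
  · cases he
  · rcases hg : δ q with ⟨q₁, q₂⟩ | ⟨q₁, q₂⟩
    · rw [step_prim_and hg, Option.some_inj] at he
      subst he
      simp [support_twoPoint, step_u12' hg, step_u1'2 hg]
    · rw [step_prim_or hg, Option.some_inj] at he
      subst he
      simp [support_twoPoint, step_r1' hg, step_r2' hg]
  · cases he

end Steps

section Forward

variable {δ F q₀} {r : Config Q → Config Q → Prop} (hr : (afaPLTS δ F q₀).IsBisimulation r)
include hr

theorem not_rel_s1_prim (v q : Q) (β γ : List OCSym) : ¬ r (.s1 v, X :: β) (.prim q, γ) :=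
  hr.not_rel_of_dead_mem_support (tr_iff δ F q₀) (z := (.r, β)) step_s1
    (by simp [support_twoPoint]) step_r
    fun _ => step_ne_none_of_mem_support_step_prim

theorem not_rel_p_prim (q : Q) (β γ : List OCSym) : ¬ r (.p, X :: β) (.prim q, γ) :=
  hr.not_rel_of_dead_mem_support (tr_iff δ F q₀) (z := (.r, X :: β)) step_p
    (by simp [support_threePoint]) step_r
    fun _ => step_ne_none_of_mem_support_step_prim

theorem not_rel_s1_s2 (v w : Q) (β β' : List OCSym) : ¬ r (.s1 v, X :: β) (.s2 w, X :: β') :=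
  hr.not_rel_of_twoPoint_wPoint (tr_iff δ F q₀) step_s1
    (hr.not_rel_of_step_eq_none (tr_iff δ F q₀) (by simp [step_s1]) step_r) step_s2

theorem not_rel_r1_r2' {q q₁ q₂ : Q} (hg : δ q = .or q₁ q₂) (β β' : List OCSym) :
    ¬ r (.r1 q, X :: β) (.r2' q, X :: β') := fun h => by
  rcases hr.rel_of_twoPoint (tr_iff δ F q₀) h (step_r1 hg) (step_r2' hg) with
    ⟨-, hs⟩ | ⟨-, hs⟩
  · exact not_rel_s1_s2 hr q q β β' hs
  · exact not_rel_s1_prim hr q q₂ β β' hs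

theorem not_rel_base_prim_of_acc :
    ∀ n q, AfaAcc δ F n q → ¬ r (.base q, stk n) (.prim q, stk n)
  | 0, q, hq => hr.not_rel_of_step_eq_none (tr_iff δ F q₀) (step_base_zero hq) step_prim_zero
  | n + 1, q, hacc => fun h => by
    rcases hg : δ q with ⟨q₁, q₂⟩ | ⟨q₁, q₂⟩
    · simp only [AfaAcc, hg] at hacc
      rcases hr.rel_of_twoPoint (tr_iff δ F q₀) h (step_base_and hg) (step_prim_and hg) with
        ⟨hu, -⟩ | ⟨hu, -⟩
      · exact not_rel_base_prim_of_acc n q₂ hacc.2 <|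
          hr.rel_of_twoPoint_left (tr_iff δ F q₀) hu (step_u12 hg) (step_u12' hg)
      · exact not_rel_base_prim_of_acc n q₁ hacc.1 <|
          hr.rel_of_twoPoint_right (tr_iff δ F q₀) hu (step_u12 hg) (step_u1'2 hg)
    · simp only [AfaAcc, hg] at hacc
      rcases hr.rel_of_twoPoint (tr_iff δ F q₀) h (step_base_or hg) (step_prim_or hg) with
        ⟨h₁, h₂⟩ | ⟨hcross, -⟩
      · rcases hacc with hacc | hacc
        · exact not_rel_base_prim_of_acc n q₁ hacc <|
            hr.rel_of_twoPoint_right (tr_iff δ F q₀) h₁ (step_r1 hg) (step_r1' hg)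
        · exact not_rel_base_prim_of_acc n q₂ hacc <|
            hr.rel_of_twoPoint_right (tr_iff δ F q₀) h₂ (step_r2 hg) (step_r2' hg)
      · exact not_rel_r1_r2' hr hg _ _ hcross

theorem rel_p_p'_succ {m : ℕ} (h : r (.p, stk (m + 1)) (.p', stk (m + 1))) :
    r (.p, stk (m + 2)) (.p', stk (m + 2)) ∧ r (.base q₀, stk m) (.prim q₀, stk m) := by
  rcases hr.rel_of_threePoint (tr_iff δ F q₀) h step_p step_p' with h' | ⟨hcross, -⟩
  · exact h'
  · exact absurd hcross (not_rel_p_prim hr _ _ _)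

theorem rel_base_prim_of_rel_p_p' (h : r (.p, stk 1) (.p', stk 1)) (m : ℕ) :
    r (.base q₀, stk m) (.prim q₀, stk m) := by
  have hp : ∀ m, r (.p, stk (m + 1)) (.p', stk (m + 1)) := fun m => by
    induction m with
    | zero => exact h
    | succ m ih => exact (rel_p_p'_succ hr ih).1
  exact (rel_p_p'_succ hr (hp m)).2

end Forward

section Backward

def Rejects (q : Q) (γ : List OCSym) : Prop := ∃ n, γ = stk n ∧ ¬ AfaAcc δ F n q

def RejectsBelow (q : Q) (γ : List OCSym) : Prop := ∃ n, γ = stk (n + 1) ∧ ¬ AfaAcc δ F n q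

variable {δ F} in
@[simp] theorem rejects_stk {q : Q} {n : ℕ} : Rejects δ F q (stk n) ↔ ¬ AfaAcc δ F n q := by
  simp [Rejects]

variable {δ F} in
@[simp] theorem rejectsBelow_stk_succ {q : Q} {n : ℕ} :
    RejectsBelow δ F q (stk (n + 1)) ↔ ¬ AfaAcc δ F n q := by
  simp [RejectsBelow]

open Classical in
def rep : Config Q → Config Q
  | (.prim q, γ) => if Rejects δ F q γ then (.base q, γ) else (.prim q, γ)
  | (.r1' q, γ) => if RejectsBelow δ F (δ q).fst γ then (.r1 q, γ) else (.r1' q, γ)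
  | (.r2' q, γ) => if RejectsBelow δ F (δ q).snd γ then (.r2 q, γ) else (.r2' q, γ)
  | (.u1'2 q, γ) => if RejectsBelow δ F (δ q).fst γ then (.u12 q, γ) else (.u1'2 q, γ)
  | (.u12' q, γ) => if RejectsBelow δ F (δ q).snd γ then (.u12 q, γ) else (.u12' q, γ)
  | (.u1'2' q, γ) =>
    if RejectsBelow δ F (δ q).fst γ then
      if RejectsBelow δ F (δ q).snd γ then (.u12 q, γ) else (.u12' q, γ)
    else
      if RejectsBelow δ F (δ q).snd γ then (.u1'2 q, γ) else (.u1'2' q, γ)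
  | (.p', γ) => if (∀ n, ¬ AfaAcc δ F n q₀) ∧ ∃ n, γ = stk n then (.p, γ) else (.p', γ)
  | c => c

theorem map_step_rep (c : Config Q) :
    (step δ F q₀ c).map (PMF.map (rep δ F q₀)) =
      (step δ F q₀ (rep δ F q₀ c)).map (PMF.map (rep δ F q₀)) := by
  obtain ⟨s, γ⟩ := c
  cases s
  all_goals try rfl
  case prim q =>
    by_cases hγ : ∃ n, γ = stk n
    · obtain ⟨_ | n, rfl⟩ := hγ
      · by_cases hq : q ∈ F <;> simp [step_stk_zero, rule, rep, AfaAcc, hq]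
      · rcases hg : δ q with ⟨q₁, q₂⟩ | ⟨q₁, q₂⟩ <;>
          by_cases h₁ : AfaAcc δ F n q₁ <;> by_cases h₂ : AfaAcc δ F n q₂ <;>
          simp [step_stk_succ, rule, rep, hg, map_twoPoint, twoPoint_comm, AfaAcc, h₁, h₂]
    · simp [rep, Rejects, not_exists.1 hγ]
  case p' =>
    by_cases hγ : ∃ n, γ = stk n
    · obtain ⟨_ | n, rfl⟩ := hγ <;> by_cases hall : ∀ n, ¬ AfaAcc δ F n q₀ <;>
        simp [step_stk_zero, step_stk_succ, rule, rep, map_threePoint, hall]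
    · simp [rep, not_exists.1 hγ]
  -- the gadget states `r₁'`, `r₂'`, `u₁'₂`, `u₁₂'`, `u₁'₂'`
  all_goals
    rename_i q
    by_cases hγ : ∃ n, γ = stk (n + 1)
    · obtain ⟨n, rfl⟩ := hγ
      rcases hg : δ q with ⟨q₁, q₂⟩ | ⟨q₁, q₂⟩ <;>
        by_cases h₁ : AfaAcc δ F n q₁ <;> by_cases h₂ : AfaAcc δ F n q₂ <;>
        simp [step_stk_succ, rule, rep, hg, map_twoPoint, h₁, h₂]
    · simp [rep, RejectsBelow, not_exists.1 hγ]

theorem isBisimulation_ker_rep :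
    (afaPLTS δ F q₀).IsBisimulation fun c c' => rep δ F q₀ c = rep δ F q₀ c' :=
  PLTS.isBisimulation_ker (tr_iff δ F q₀) _ (map_step_rep δ F q₀)

end Backward

end AfaPOCA

open AfaPOCA in
theorem afa_emptiness_reduction_general (Q : Type)
    (δ : Q → Gate Q) (q₀ : Q) (F : Set Q) :
    (∀ (q : Q) (n : ℕ),
        (PPDARules.plts (AfaRule δ F q₀ : PPDARules (CS Q) OCSym Unit)).Bisim
            (oconf (CS.base q) n) (oconf (CS.prim q) n)
          ↔ ¬ AfaAcc δ F n q) ∧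
    ((PPDARules.plts (AfaRule δ F q₀ : PPDARules (CS Q) OCSym Unit)).Bisim
        (oconf CS.p 1) (oconf CS.p' 1)
      ↔ ∀ n : ℕ, ¬ AfaAcc δ F n q₀) := by
  refine ⟨fun q n => ⟨?_, fun hrej => ?_⟩, ⟨?_, fun hall => ?_⟩⟩
  · rintro ⟨r, hr, h⟩ hacc
    exact not_rel_base_prim_of_acc hr n q hacc h
  · exact ⟨_, isBisimulation_ker_rep δ F q₀, by simp [oconf_eq, rep, hrej]⟩
  · rintro ⟨r, hr, h⟩ n hacc
    exact not_rel_base_prim_of_acc hr n q₀ hacc (rel_base_prim_of_rel_p_p' hr h n)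
  · exact ⟨_, isBisimulation_ker_rep δ F q₀, by simp [oconf_eq, rep, hall]⟩

/-- For the pOCA `Δ` constructed from a 1L-AFA
`(Q, δ, q₀, F)`: (1) `qXⁿZ ∼ q'XⁿZ` in `S(Δ)` iff `¬ AfaAcc(q, n)`, and
(2) `pXZ ∼ p'XZ` in `S(Δ)` iff `{n | AfaAcc(q₀, n)} = ∅`. -/
theorem afa_emptiness_reduction (Q : Type) [Fintype Q]
    (δ : Q → Gate Q) (q₀ : Q) (F : Set Q) :
    (∀ (q : Q) (n : ℕ),
        (PPDARules.plts (AfaRule δ F q₀ : PPDARules (CS Q) OCSym Unit)).Bisim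
            (oconf (CS.base q) n) (oconf (CS.prim q) n)
          ↔ ¬ AfaAcc δ F n q) ∧
    ((PPDARules.plts (AfaRule δ F q₀ : PPDARules (CS Q) OCSym Unit)).Bisim
        (oconf CS.p 1) (oconf CS.p' 1)
      ↔ ∀ n : ℕ, ¬ AfaAcc δ F n q₀) :=
  afa_emptiness_reduction_general Q δ q₀ F
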